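/- The spectral radius of J^{BR} is strictly less than 1 (equivalently, all eigenvalues lie in the open interval (−1, 1)) if and only if Σ_{n=1}^N τ_n β_n/(λ_n(1 + 2β_n)) < 1. -/

import Mathlib

/-!
Write `d n = β n / (1 + β n) ∈ (0, 1)` and `u n = β n / (λ n (1 + β n))`, so that
`J = diag d - u τᵀ`. By the matrix determinant lemma, a `ξ` different from every `d n` is an
eigenvalue iff `f ξ = ∑ τ n u n / (d n - ξ) = 1`, and `τ n u n / (d n + 1)` is the `n`-th term of the
sum in the criterion, which is thus `f (-1) < 1`. If `f (-1) ≥ 1`, then since `f → 0` at `-∞` the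
intermediate value theorem gives a real eigenvalue `ξ ≤ -1`. Conversely, on `|ξ| ≥ 1` each
`Re (1 / (d - ξ))` is maximal at `ξ = -1`, so an eigenvalue there forces `1 = Re f ξ ≤ f (-1)`.
-/

open Finset Matrix

theorem Matrix.det_diagonal_add_vecMulVec {K n : Type*} [Field K] [Fintype n] [DecidableEq n]
    {D : n → K} (hD : ∀ i, D i ≠ 0) (u v : n → K) :
    (diagonal D + vecMulVec u v).det = (∏ i, D i) * (1 + ∑ i, v i * u i / D i) := by
  have hfactor : diagonal D + vecMulVec u v = diagonal D * (1 + vecMulVec (u / D) v) := by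
    rw [mul_add, mul_one]
    congr 1
    ext i j
    rw [diagonal_mul, vecMulVec_apply, vecMulVec_apply, Pi.div_apply, ← mul_assoc,
      mul_div_cancel₀ _ (hD i)]
  rw [hfactor, det_mul, det_diagonal, vecMulVec_eq Unit, det_one_add_replicateCol_mul_replicateRow]
  simp [dotProduct, mul_div_assoc]

theorem Matrix.mem_spectrum_diagonal_sub_vecMulVec_iff {K n : Type*} [Field K] [Fintype n]
    [DecidableEq n] {d u v : n → K} {ξ : K} (hξ : ∀ i, ξ ≠ d i) :
    ξ ∈ spectrum K (diagonal d - vecMulVec u v) ↔ ∑ i, v i * u i / (d i - ξ) = 1 := by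
  have hshift : algebraMap K (Matrix n n K) ξ - (diagonal d - vecMulVec u v) =
      diagonal (fun i => ξ - d i) + vecMulVec u v := by
    rw [algebraMap_eq_diagonal, ← diagonal_sub, sub_sub_eq_add_sub, sub_add_eq_add_sub]; rfl
  have hprod : ∏ i, (ξ - d i) ≠ 0 := prod_ne_zero_iff.2 fun i _ => sub_ne_zero.2 (hξ i)
  have hflip : ∑ i, v i * u i / (ξ - d i) = -∑ i, v i * u i / (d i - ξ) := by
    rw [← sum_neg_distrib]; congr! 1 with i; rw [← div_neg, neg_sub]
  rw [spectrum.mem_iff, isUnit_iff_isUnit_det, hshift,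
    det_diagonal_add_vecMulVec (fun i => sub_ne_zero.2 (hξ i)), isUnit_iff_ne_zero, not_not,
    mul_eq_zero, or_iff_right hprod, hflip, ← sub_eq_add_neg, sub_eq_zero, eq_comm]

theorem Complex.re_inv_ofReal_sub_le {d : ℝ} (hd₀ : -1 < d) (hd₁ : d ≤ 1) {ξ : ℂ}
    (hξ : 1 ≤ ‖ξ‖) : ((d : ℂ) - ξ)⁻¹.re ≤ (d + 1)⁻¹ := by
  have hunit : 1 ≤ ξ.re * ξ.re + ξ.im * ξ.im := by
    rw [← normSq_apply, normSq_eq_norm_sq]; nlinarith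
  have hnum : (d - ξ.re) * (d + 1) ≤ (d - ξ.re) * (d - ξ.re) + ξ.im * ξ.im := by
    rcases le_or_gt (-1) ξ.re with hre | hre
    · nlinarith
    · nlinarith
  rw [inv_re, normSq_apply, sub_re, sub_im, ofReal_re, ofReal_im, zero_sub, neg_mul_neg]
  rcases (add_nonneg (mul_self_nonneg (d - ξ.re)) (mul_self_nonneg ξ.im)).eq_or_lt with h | h
  · rw [← h, div_zero]; exact inv_nonneg.2 (by linarith)
  · rw [div_le_iff₀ h, inv_mul_eq_div, le_div_iff₀ (by linarith)]; exact hnum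

theorem one_le_sum_div_add_one_of_sum_div_sub_eq_one {ι : Type*} [Fintype ι] {c d : ι → ℝ}
    (hc : ∀ i, 0 ≤ c i) (hd₀ : ∀ i, -1 < d i) (hd₁ : ∀ i, d i ≤ 1) {ξ : ℂ} (hξ : 1 ≤ ‖ξ‖)
    (h : ∑ i, (c i : ℂ) / (d i - ξ) = 1) : 1 ≤ ∑ i, c i / (d i + 1) :=
  calc (1 : ℝ) = (∑ i, (c i : ℂ) / (d i - ξ)).re := by rw [h, Complex.one_re]
    _ = ∑ i, c i * ((d i : ℂ) - ξ)⁻¹.re := by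
        simp only [Complex.re_sum, div_eq_mul_inv, Complex.re_ofReal_mul]
    _ ≤ ∑ i, c i * (d i + 1)⁻¹ := sum_le_sum fun i _ =>
        mul_le_mul_of_nonneg_left (Complex.re_inv_ofReal_sub_le (hd₀ i) (hd₁ i) hξ) (hc i)
    _ = ∑ i, c i / (d i + 1) := by simp only [div_eq_mul_inv]

theorem exists_le_sum_div_sub_eq_one {ι : Type*} [Fintype ι] {c d : ι → ℝ} {a : ℝ}
    (hc : ∀ i, 0 ≤ c i) (hd : ∀ i, a < d i) (h : 1 ≤ ∑ i, c i / (d i - a)) :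
    ∃ ξ ≤ a, ∑ i, c i / (d i - ξ) = 1 := by
  set S := ∑ i, c i
  have hS : 0 ≤ S := sum_nonneg fun i _ => hc i
  have hfar : ∑ i, c i / (d i - (a - (1 + S))) < 1 := by
    calc ∑ i, c i / (d i - (a - (1 + S))) ≤ ∑ i, c i / (1 + S) :=
          sum_le_sum fun i _ => div_le_div_of_nonneg_left (hc i) (by positivity)
            (by linarith [hd i])
      _ = S / (1 + S) := by rw [sum_div]
      _ < 1 := (div_lt_one (by positivity)).2 (by linarith)
  have hcont : ContinuousOn (fun ξ => ∑ i, c i / (d i - ξ)) (Set.Icc (a - (1 + S)) a) :=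
    continuousOn_finsetSum _ fun i _ => continuousOn_const.div (continuousOn_const.sub
      continuousOn_id) fun ξ hξ => sub_ne_zero.2 (by linarith [hd i, hξ.2])
  obtain ⟨ξ, hξ, hroot⟩ := intermediate_value_Icc (by linarith) hcont ⟨hfar.le, h⟩
  exact ⟨ξ, hξ.2, hroot⟩

theorem Matrix.forall_mem_spectrum_diagonal_sub_vecMulVec_norm_lt_one_iff {ι : Type*}
    [Fintype ι] [DecidableEq ι] {d u v : ι → ℝ} (hd₀ : ∀ i, -1 < d i) (hd₁ : ∀ i, d i < 1)
    (hc : ∀ i, 0 ≤ v i * u i) :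
    (∀ ξ : ℂ, ξ ∈ spectrum ℂ ((diagonal d - vecMulVec u v).map (algebraMap ℝ ℂ)) → ‖ξ‖ < 1)
      ↔ ∑ i, v i * u i / (d i + 1) < 1 := by
  have hspec (ξ : ℂ) (hξ : ∀ i, ξ ≠ d i) :
      ξ ∈ spectrum ℂ ((diagonal d - vecMulVec u v).map (algebraMap ℝ ℂ)) ↔
        ∑ i, ((v i * u i : ℝ) : ℂ) / (d i - ξ) = 1 := by
    have hmap : (diagonal d - vecMulVec u v).map (algebraMap ℝ ℂ) =
        diagonal (fun i => (d i : ℂ)) - vecMulVec (fun i => (u i : ℂ)) (fun i => (v i : ℂ)) := by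
      ext i j
      by_cases h : i = j <;> simp [vecMulVec_apply, h]
    rw [hmap, mem_spectrum_diagonal_sub_vecMulVec_iff hξ]; push_cast; rfl
  constructor
  · intro hstable
    by_contra! hge
    obtain ⟨ξ, hξ, hroot⟩ := exists_le_sum_div_sub_eq_one (d := d) (a := -1) hc hd₀
      (by simpa only [sub_neg_eq_add] using hge)
    have hne (i : ι) : (ξ : ℂ) ≠ d i := by
      exact_mod_cast (show ξ < d i by linarith [hd₀ i]).ne
    have hnorm := hstable ξ ((hspec ξ hne).2 (by exact_mod_cast hroot))
    rw [Complex.norm_real, Real.norm_eq_abs, abs_lt] at hnorm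
    linarith [hnorm.1]
  · intro hlt ξ hξ
    by_contra! hge
    have hne (i : ι) : ξ ≠ d i := by
      rintro rfl
      rw [Complex.norm_real, Real.norm_eq_abs] at hge
      exact (abs_lt.2 ⟨hd₀ i, hd₁ i⟩).not_ge hge
    exact hlt.not_ge (one_le_sum_div_add_one_of_sum_div_sub_eq_one hc hd₀ (fun i => (hd₁ i).le)
      hge ((hspec ξ hne).1 hξ))

theorem JBR_stability_iff_general (N : ℕ)
    (β τ lam : Fin N → ℝ)
    (hβ : ∀ n, 0 < β n) (hτ : ∀ n, 0 < τ n) (hlam : ∀ n, 0 < lam n)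
    (J : Matrix (Fin N) (Fin N) ℝ)
    (hJ : ∀ i k, J i k = if i = k then β i * (lam i - τ i) / (lam i * (1 + β i))
        else -(β i * τ k / (lam i * (1 + β i)))) :
    (∀ ξ : ℂ, ξ ∈ spectrum ℂ (J.map (algebraMap ℝ ℂ)) → ‖ξ‖ < 1)
      ↔ ∑ n, τ n * β n / (lam n * (1 + 2 * β n)) < 1 := by
  set d : Fin N → ℝ := fun n => β n / (1 + β n)
  set u : Fin N → ℝ := fun n => β n / (lam n * (1 + β n))
  have hJ_eq : J = diagonal d - vecMulVec u τ := by
    ext i k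
    have := hlam i; have := hβ i
    rw [hJ, Matrix.sub_apply, vecMulVec_apply, diagonal_apply]
    split_ifs with h
    · subst h; simp only [d, u]; field_simp
    · simp only [u]; field_simp; ring
  have hsum : ∑ n, τ n * β n / (lam n * (1 + 2 * β n)) = ∑ n, τ n * u n / (d n + 1) := by
    refine sum_congr rfl fun n _ => ?_
    have := hlam n; have := hβ n
    simp only [d, u]; field_simp; ring
  have hd₀ (n : Fin N) : 0 < d n := by have := hβ n; positivity
  rw [hJ_eq, hsum]
  refine forall_mem_spectrum_diagonal_sub_vecMulVec_norm_lt_one_iff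
    (fun n => by linarith [hd₀ n]) (fun n => (div_lt_one (by linarith [hβ n])).2 (by linarith))
    (fun n => ?_)
  have := hβ n; have := hτ n; have := hlam n
  positivity

/-- The spectral radius of `J^{BR}` is < 1 (all eigenvalues in (−1,1))
iff `Σ_n τ_n β_n / (λ_n (1 + 2 β_n)) < 1`. -/
theorem JBR_stability_iff (N : ℕ) (hN : 1 ≤ N)
    (β τ lam : Fin N → ℝ)
    (hβ : ∀ n, 0 < β n) (hτ : ∀ n, 0 < τ n) (hlam : ∀ n, 0 < lam n)
    (J : Matrix (Fin N) (Fin N) ℝ)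
    (hJ : ∀ i k, J i k = if i = k then β i * (lam i - τ i) / (lam i * (1 + β i))
        else -(β i * τ k / (lam i * (1 + β i)))) :
    (∀ ξ : ℂ, ξ ∈ spectrum ℂ (J.map (algebraMap ℝ ℂ)) → ‖ξ‖ < 1)
      ↔ ∑ n, τ n * β n / (lam n * (1 + 2 * β n)) < 1 :=
  JBR_stability_iff_general N β τ lam hβ hτ hlam J hJ
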